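/- arXiv:1307.7170 — 5 statements merged into one kernel-verified Lean document; each statement's English description precedes it below -/
import Mathlib

section
/- Let n ≥ 3, let C be the n×n real circulant matrix with entries C_{i,i+1 mod n} = C_{i,i−1 mod n} = 1/2 and all other entries 0, let I be the n×n identity, let 𝟙 ∈ ℝⁿ be the all-ones vector, and let b ∈ ℝⁿ be the vector with b_1 = −π, b_n = π and all other entries 0. Let ω* ∈ ℝ, k_φ > 0, and let φ : ℝ → ℝⁿ be differentiable with φ'(t) = ω*·𝟙 + k_φ((C − I)φ(t) + b) for all t. Then the phase error e_φ(t) := (C − I)φ(t) + b converges to 0 as t → ∞, and consequently φ'(t) converges to ω*·𝟙; i.e. each phase derivative φᵢ'(t) tends to ω* and each phase φᵢ(t) tends to the average of its neighbors' phases (as encoded by e_φ → 0). -/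
open Matrix

/-- The `n × n` circulant matrix with first row `(0, 1/2, 0, …, 0, 1/2)`. -/
noncomputable def ringC (n : ℕ) : Matrix (Fin n) (Fin n) ℝ :=
  Matrix.of fun i j =>
    if ((i : ℕ) + 1) % n = (j : ℕ) ∨ ((j : ℕ) + 1) % n = (i : ℕ) then (1 : ℝ) / 2 else 0

/-- The vector `b = (-π, 0, …, 0, π)ᵀ`. -/
noncomputable def vecB (n : ℕ) : Fin n → ℝ := fun i =>
  if (i : ℕ) = 0 then -Real.pi else if (i : ℕ) = n - 1 then Real.pi else 0

/-! The phase error `e = (C - I) φ + b` solves `e' = k_φ (C - I) e`, since `(C - I) 𝟙 = 0`, and its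
entries sum to zero, since `𝟙ᵀ (C - I) = 0` and `𝟙ᵀ b = 0`. Along this flow `V = ∑ eᵢ²` has
`V' = 2 k_φ ⟨e, (C - I) e⟩ = -k_φ ∑ (eᵢ - eᵢ₊₁)²`. This form vanishes only on multiples of `𝟙`, so
by compactness of the unit sphere it dominates a positive multiple of `V` on the sum-zero
hyperplane; hence `V' ≤ -a V`, and Grönwall's inequality gives `V → 0`. -/

open Finset Filter Topology

namespace Fin

variable {n : ℕ} [NeZero n]

theorem sum_apply_add_one_sub {M : Type*} [AddCommGroup M] (u : Fin n → M) :
    ∑ i, (u (i + 1) - u i) = 0 := by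
  rw [sum_sub_distrib, Fintype.sum_equiv (Equiv.addRight 1) (fun i => u (i + 1)) u fun _ => rfl,
    sub_self]

theorem add_one_ne_sub_one (hn : 3 ≤ n) (i : Fin n) : i + 1 ≠ i - 1 := by
  rw [Ne, eq_sub_iff_add_eq, add_assoc, add_eq_left, Fin.ext_iff, Fin.val_add, Fin.val_one',
    Nat.mod_eq_of_lt (a := 1) (by omega), Fin.val_zero, Nat.mod_eq_of_lt (by omega)]
  omega

open Fin.NatCast in
theorem apply_eq_apply_zero_of_apply_add_one {α : Type*} {f : Fin n → α}
    (h : ∀ i, f (i + 1) = f i) (i : Fin n) : f i = f 0 := by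
  have : ∀ k : ℕ, f (k : Fin n) = f 0 := fun k => by
    induction k with
    | zero => simp
    | succ k ih => rw [Nat.cast_succ, h, ih]
  simpa using this i

end Fin

section ring

variable {n : ℕ} [NeZero n]

theorem ringC_apply (hn : 3 ≤ n) (i j : Fin n) :
    ringC n i j = if j ∈ ({i + 1, i - 1} : Finset (Fin n)) then 1 / 2 else 0 := by
  have h1 : (1 : Fin n).val = 1 := by rw [Fin.val_one', Nat.mod_eq_of_lt (by omega)]
  have hi : ((i : ℕ) + 1) % n = j ↔ j = i + 1 := by
    rw [Fin.ext_iff, Fin.val_add, h1, eq_comm]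
  have hj : ((j : ℕ) + 1) % n = i ↔ j = i - 1 := by
    rw [eq_sub_iff_add_eq, Fin.ext_iff, Fin.val_add, h1]
  simp only [ringC, of_apply, hi, hj, mem_insert, mem_singleton]

theorem ringC_mulVec_apply (hn : 3 ≤ n) (x : Fin n → ℝ) (i : Fin n) :
    (ringC n *ᵥ x) i = (x (i + 1) + x (i - 1)) / 2 := by
  simp only [mulVec, dotProduct, ringC_apply hn, ite_mul, zero_mul, sum_ite_mem, univ_inter]
  rw [sum_pair (Fin.add_one_ne_sub_one hn i)]
  ring

theorem ringC_sub_one_mulVec_apply (hn : 3 ≤ n) (x : Fin n → ℝ) (i : Fin n) :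
    ((ringC n - 1) *ᵥ x) i = (x (i + 1) + x (i - 1)) / 2 - x i := by
  rw [sub_mulVec, Pi.sub_apply, ringC_mulVec_apply hn, one_mulVec]

theorem ringC_sub_one_mulVec_const (hn : 3 ≤ n) (a : ℝ) :
    (ringC n - 1) *ᵥ (fun _ => a) = 0 := by
  ext i
  rw [ringC_sub_one_mulVec_apply hn, Pi.zero_apply]
  ring

theorem sum_ringC_sub_one_mulVec (hn : 3 ≤ n) (x : Fin n → ℝ) :
    ∑ i, ((ringC n - 1) *ᵥ x) i = 0 := by
  rw [← Fin.sum_apply_add_one_sub fun i => (x i - x (i - 1)) / 2]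
  refine sum_congr rfl fun i _ => ?_
  rw [ringC_sub_one_mulVec_apply hn, add_sub_cancel_right]
  ring

theorem sum_mul_ringC_sub_one_mulVec (hn : 3 ≤ n) (x : Fin n → ℝ) :
    ∑ i, x i * ((ringC n - 1) *ᵥ x) i = -(1 / 2) * ∑ i, (x i - x (i + 1)) ^ 2 := by
  rw [mul_sum, ← sub_eq_zero, ← sum_sub_distrib,
    ← Fin.sum_apply_add_one_sub fun i => (x i ^ 2 - x i * x (i - 1)) / 2]
  refine sum_congr rfl fun i _ => ?_
  rw [ringC_sub_one_mulVec_apply hn, add_sub_cancel_right]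
  ring

theorem sum_vecB (hn : 3 ≤ n) : ∑ i, vecB n i = 0 := by
  rw [Fintype.sum_eq_add ⟨0, by omega⟩ ⟨n - 1, by omega⟩ (by simp [Fin.ext_iff]; omega)]
  · simp [vecB, show n - 1 ≠ 0 by omega]
  · rintro i ⟨h0, h1⟩
    rw [vecB, if_neg fun h => h0 (Fin.ext h), if_neg fun h => h1 (Fin.ext h)]

end ring

theorem exists_pos_mul_norm_sq_le {E : Type*} [NormedAddCommGroup E] [NormedSpace ℝ E]
    [FiniteDimensional ℝ E] {q : E → ℝ} (hq : Continuous q)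
    (hsmul : ∀ (a : ℝ) (x : E), q (a • x) = a ^ 2 * q x) (hpos : ∀ x ≠ 0, 0 < q x) :
    ∃ c > 0, ∀ x, c * ‖x‖ ^ 2 ≤ q x := by
  have hq0 : q 0 = 0 := by simpa using hsmul 0 0
  rcases subsingleton_or_nontrivial E with hE | hE
  · exact ⟨1, one_pos, fun x => by simp [Subsingleton.elim x 0, hq0]⟩
  obtain ⟨z, hz, hmin⟩ := (isCompact_sphere (0 : E) 1).exists_isMinOn
    (NormedSpace.sphere_nonempty.mpr zero_le_one) hq.continuousOn
  have hz0 : z ≠ 0 := ne_zero_of_mem_unit_sphere ⟨z, hz⟩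
  refine ⟨q z, hpos z hz0, fun x => ?_⟩
  rcases eq_or_ne x 0 with rfl | hx
  · simp [hq0]
  have hx' : ‖x‖⁻¹ • x ∈ Metric.sphere (0 : E) 1 := by
    simp [norm_smul, hx]
  calc q z * ‖x‖ ^ 2 ≤ q (‖x‖⁻¹ • x) * ‖x‖ ^ 2 := by gcongr; exact hmin hx'
    _ = q x := by rw [hsmul]; field_simp

theorem sum_sq_le_card_mul_norm_sq {ι : Type*} [Fintype ι] (x : ι → ℝ) :
    ∑ i, x i ^ 2 ≤ Fintype.card ι * ‖x‖ ^ 2 := by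
  rw [← nsmul_eq_mul]
  refine sum_le_card_nsmul _ _ _ fun i _ => ?_
  rw [← sq_abs, ← Real.norm_eq_abs]
  exact pow_le_pow_left₀ (norm_nonneg _) (norm_le_pi_norm x i) 2

theorem norm_le_sqrt_sum_sq {ι : Type*} [Fintype ι] (x : ι → ℝ) :
    ‖x‖ ≤ √(∑ i, x i ^ 2) := by
  refine (pi_norm_le_iff_of_nonneg (Real.sqrt_nonneg _)).mpr fun i => ?_
  rw [Real.norm_eq_abs]
  exact Real.abs_le_sqrt
    (single_le_sum (f := fun i => x i ^ 2) (fun i _ => sq_nonneg _) (mem_univ i))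

theorem eq_zero_of_sum_eq_zero_of_sum_sq_sub_eq_zero {n : ℕ} [NeZero n] {x : Fin n → ℝ}
    (hsum : ∑ i, x i = 0) (hdiff : ∑ i, (x i - x (i + 1)) ^ 2 = 0) : x = 0 := by
  have hshift : ∀ i, x (i + 1) = x i := fun i => by
    have := (sum_eq_zero_iff_of_nonneg fun i _ => sq_nonneg (x i - x (i + 1))).mp hdiff i
      (mem_univ i)
    linarith [pow_eq_zero_iff two_ne_zero |>.mp this]
  have hconst := Fin.apply_eq_apply_zero_of_apply_add_one hshift
  have hx0 : x 0 = 0 := by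
    simpa [hconst, NeZero.ne n] using hsum
  ext i
  rw [hconst, hx0, Pi.zero_apply]

theorem exists_pos_mul_sum_sq_le_sum_sq_sub {n : ℕ} [NeZero n] :
    ∃ c > 0, ∀ x : Fin n → ℝ, ∑ i, x i = 0 →
      c * ∑ i, x i ^ 2 ≤ ∑ i, (x i - x (i + 1)) ^ 2 := by
  let S : Submodule ℝ (Fin n → ℝ) := LinearMap.ker (∑ i, LinearMap.proj i)
  have hS : ∀ x, x ∈ S ↔ ∑ i, x i = 0 := fun x => by simp [S]
  let q : S → ℝ := fun x => ∑ i, ((x : Fin n → ℝ) i - (x : Fin n → ℝ) (i + 1)) ^ 2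
  have hq : Continuous q := by
    refine continuous_finsetSum _ fun i _ => ?_
    exact (by fun_prop : Continuous fun x : Fin n → ℝ => (x i - x (i + 1)) ^ 2).comp
      continuous_subtype_val
  have hsmul : ∀ (a : ℝ) (x : S), q (a • x) = a ^ 2 * q x := fun a x => by
    simp only [q, mul_sum, Submodule.coe_smul, Pi.smul_apply, smul_eq_mul]
    exact sum_congr rfl fun i _ => by ring
  have hpos : ∀ x ≠ 0, 0 < q x := fun x hx =>
    (sum_nonneg fun i _ => sq_nonneg _).lt_of_ne fun h =>
      hx (Subtype.ext (eq_zero_of_sum_eq_zero_of_sum_sq_sub_eq_zero ((hS x).mp x.2) h.symm))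
  obtain ⟨c, hc, hcq⟩ := exists_pos_mul_norm_sq_le hq hsmul hpos
  -- `‖·‖` on `Fin n → ℝ` is the sup norm, hence the loss of a factor `n`.
  have hn : (0 : ℝ) < n := by exact_mod_cast NeZero.pos n
  refine ⟨c / n, div_pos hc hn, fun x hx => ?_⟩
  calc c / n * ∑ i, x i ^ 2 ≤ c / n * (n * ‖x‖ ^ 2) := by
        gcongr; simpa using sum_sq_le_card_mul_norm_sq x
    _ = c * ‖x‖ ^ 2 := by field_simp
    _ ≤ _ := hcq ⟨x, (hS x).mpr hx⟩

theorem tendsto_zero_of_hasDerivAt_le_neg_mul {a : ℝ} (ha : 0 < a) {V V' : ℝ → ℝ}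
    (hV : ∀ t, HasDerivAt V (V' t) t) (hV0 : ∀ t, 0 ≤ V t) (hV' : ∀ t, V' t ≤ -a * V t) :
    Tendsto V atTop (𝓝 0) := by
  have hbound : ∀ t ≥ 0, V t ≤ V 0 * Real.exp (-a * t) := fun t ht => by
    have := le_gronwallBound_of_liminf_deriv_right_le (ε := 0)
      (fun x _ => (hV x).continuousAt.continuousWithinAt)
      (fun x _ _ hr => (hV x).hasDerivWithinAt.liminf_right_slope_le hr) le_rfl
      (fun x _ => (hV' x).trans_eq (add_zero _).symm) t ⟨ht, le_rfl⟩
    rwa [gronwallBound_ε0, sub_zero] at this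
  have hexp : Tendsto (fun t => V 0 * Real.exp (-a * t)) atTop (𝓝 0) := by
    simpa using (Real.tendsto_exp_atBot.comp
      (tendsto_id.const_mul_atTop_of_neg (neg_lt_zero.mpr ha))).const_mul (V 0)
  exact squeeze_zero' (Eventually.of_forall hV0) (eventually_atTop.mpr ⟨0, hbound⟩) hexp

theorem tendsto_zero_of_hasDerivAt_ringC_sub_one {n : ℕ} [NeZero n] (hn : 3 ≤ n) {k : ℝ}
    (hk : 0 < k) {e : ℝ → Fin n → ℝ} (he : ∀ t, HasDerivAt e (k • ((ringC n - 1) *ᵥ e t)) t)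
    (hsum : ∀ t, ∑ i, e t i = 0) : Tendsto e atTop (𝓝 0) := by
  obtain ⟨c, hc, hgap⟩ := exists_pos_mul_sum_sq_le_sum_sq_sub (n := n)
  have hV : ∀ t, HasDerivAt (fun t => ∑ i, e t i ^ 2)
      (2 * k * ∑ i, e t i * ((ringC n - 1) *ᵥ e t) i) t := fun t => by
    refine (HasDerivAt.fun_sum (u := univ) fun i _ =>
      (hasDerivAt_pi.mp (he t) i).fun_pow 2).congr_deriv ?_
    simp only [mul_sum, Pi.smul_apply, smul_eq_mul]
    exact sum_congr rfl fun i _ => by ring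
  have hV' : ∀ t, 2 * k * ∑ i, e t i * ((ringC n - 1) *ᵥ e t) i
      ≤ -(k * c) * ∑ i, e t i ^ 2 := fun t => by
    rw [sum_mul_ringC_sub_one_mulVec hn]
    nlinarith [hgap (e t) (hsum t)]
  have hVlim := tendsto_zero_of_hasDerivAt_le_neg_mul (mul_pos hk hc) hV
    (fun t => sum_nonneg fun i _ => sq_nonneg (e t i)) hV'
  refine squeeze_zero_norm (fun t => norm_le_sqrt_sum_sq (e t)) ?_
  simpa [Function.comp_def] using (Real.continuous_sqrt.tendsto 0).comp hVlim

/-- Proposition 1 (Controller 1, Desired Angular Speed): under the phase dynamics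
`φ' = ω* 𝟙 + k_φ ((C - I) φ + b)`, the phase error `e_φ = (C - I) φ + b` tends to `0`
and `φ'` tends to `ω* 𝟙`. -/
theorem stmt_4 (n : ℕ) (hn : 3 ≤ n) (ωs kφ : ℝ) (hkφ : 0 < kφ)
    (φ : ℝ → Fin n → ℝ)
    (hφ : ∀ t, HasDerivAt φ
      (ωs • (fun _ => (1 : ℝ)) + kφ • ((ringC n - 1) *ᵥ φ t + vecB n)) t) :
    Filter.Tendsto (fun t => (ringC n - 1) *ᵥ φ t + vecB n) Filter.atTop (nhds 0) ∧
    Filter.Tendsto (fun t => deriv φ t) Filter.atTop (nhds (ωs • fun _ => (1 : ℝ))) := by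
  have : NeZero n := ⟨by omega⟩
  set e := fun t => (ringC n - 1) *ᵥ φ t + vecB n
  have he : ∀ t, HasDerivAt e (kφ • ((ringC n - 1) *ᵥ e t)) t := fun t => by
    refine (((mulVecLin (ringC n - 1)).toContinuousLinearMap.hasFDerivAt.comp_hasDerivAt t
      (hφ t)).add_const (vecB n)).congr_deriv ?_
    change (ringC n - 1) *ᵥ (ωs • (fun _ => 1) + kφ • e t) = _
    rw [mulVec_add, mulVec_smul, mulVec_smul, ringC_sub_one_mulVec_const hn, smul_zero, zero_add]
  have hsum : ∀ t, ∑ i, e t i = 0 := fun t => by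
    simp [e, sum_add_distrib, sum_ringC_sub_one_mulVec hn, sum_vecB hn]
  have he_lim := tendsto_zero_of_hasDerivAt_ringC_sub_one hn hkφ he hsum
  refine ⟨he_lim, ?_⟩
  rw [show deriv φ = fun t => ωs • (fun _ => 1) + kφ • e t from funext fun t => (hφ t).deriv]
  simpa using tendsto_const_nhds.add (he_lim.const_smul kφ)
end

section
/- Let n ≥ 3 and k_φ > 0, f > 0. Let C be the n×n real circulant matrix with entries C_{i,i+1 mod n} = C_{i,i−1 mod n} = 1/2 and all other entries 0, and D the n×n real circulant matrix with D_{i,i+1 mod n} = 1/2, D_{i,i−1 mod n} = −1/2, other entries 0. Then for every x ∈ ℝⁿ, exp(t·(k_φ(C − I) + f·D))·x converges, as t → ∞, to ((Σ_{i=1}^n x_i)/n)·𝟙, where 𝟙 is the all-ones vector. In particular, if Σ_i x_i = 0 then exp(t(k_φ(C − I) + f D))·x → 0. -/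
open Matrix

/-- The `n × n` circulant matrix with first row `(0, -1/2, 0, …, 0, 1/2)`. -/
noncomputable def ringD (n : ℕ) : Matrix (Fin n) (Fin n) ℝ :=
  Matrix.of fun i j =>
    if ((i : ℕ) + 1) % n = (j : ℕ) then (1 : ℝ) / 2
    else if ((j : ℕ) + 1) % n = (i : ℕ) then -(1 : ℝ) / 2 else 0

/-!
Write `A = k_φ (C - I) + f D`. The all-ones vector `𝟙` lies in the kernel of `A` and is orthogonal
to its range, so `exp (t A)` fixes `𝟙` and preserves `∑ᵢ xᵢ`. Since `D` is skew-symmetric,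
`⟪v, A v⟫ = -(k_φ / 2) ∑ᵢ (v (i+1) - v i)²`, and on mean-zero vectors this Dirichlet energy of
the cycle dominates a multiple of `‖v‖²`. Hence `‖exp (t A) y‖²` decays exponentially for
mean-zero `y`, and writing `x = y + (∑ᵢ xᵢ / n) 𝟙` gives the limit.
-/

open Filter Topology NormedSpace

theorem tendsto_zero_of_hasDerivAt_le_neg_mul_s7 {φ φ' : ℝ → ℝ} {ε : ℝ} (hε : 0 < ε)
    (hφ : ∀ t, HasDerivAt φ (φ' t) t) (hle : ∀ t, φ' t ≤ -ε * φ t) (hφ_nonneg : ∀ t, 0 ≤ φ t) :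
    Tendsto φ atTop (𝓝 0) := by
  have hanti : Antitone fun t => Real.exp (ε * t) * φ t := by
    refine antitone_of_hasDerivAt_nonpos
      (f' := fun t => Real.exp (ε * t) * (ε * φ t + φ' t)) (fun t => ?_) fun t => ?_
    · exact (((hasDerivAt_id' t).const_mul ε).exp.mul (hφ t)).congr_deriv (by ring)
    · exact mul_nonpos_of_nonneg_of_nonpos (Real.exp_pos _).le (by linarith [hle t])
  have hbound (t : ℝ) (ht : 0 ≤ t) : φ t ≤ φ 0 * Real.exp (-(ε * t)) := by
    rw [Real.exp_neg, ← div_eq_mul_inv, le_div_iff₀ (Real.exp_pos _), mul_comm]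
    simpa using hanti ht
  have hdecay : Tendsto (fun t => φ 0 * Real.exp (-(ε * t))) atTop (𝓝 0) := by
    simpa using (Real.tendsto_exp_neg_atTop_nhds_zero.comp
      (tendsto_id.const_mul_atTop hε)).const_mul (φ 0)
  exact squeeze_zero' (.of_forall hφ_nonneg) ((eventually_ge_atTop 0).mono hbound) hdecay

theorem exists_pos_mul_sq_norm_le {E : Type*} [NormedAddCommGroup E] [NormedSpace ℝ E]
    [FiniteDimensional ℝ E] {Q : E → ℝ} (hQ : Continuous Q)
    (hhom : ∀ (t : ℝ) v, Q (t • v) = t ^ 2 * Q v) (hpos : ∀ v ≠ 0, 0 < Q v) :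
    ∃ c > 0, ∀ v, c * ‖v‖ ^ 2 ≤ Q v := by
  have hQ0 : Q 0 = 0 := by simpa using hhom 0 0
  rcases subsingleton_or_nontrivial E with hE | hE
  · exact ⟨1, one_pos, fun v => by simp [Subsingleton.elim v 0, hQ0]⟩
  obtain ⟨v₀, hv₀, hmin⟩ := (isCompact_sphere (0 : E) 1).exists_isMinOn
    (NormedSpace.sphere_nonempty.2 zero_le_one) hQ.continuousOn
  have hv₀ : ‖v₀‖ = 1 := by simpa using hv₀
  refine ⟨Q v₀, hpos v₀ (norm_ne_zero_iff.1 (by simp [hv₀])), fun v => ?_⟩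
  rcases eq_or_ne v 0 with rfl | hv
  · simp [hQ0]
  have hnorm : ‖v‖ ≠ 0 := norm_ne_zero_iff.2 hv
  have hunit : ‖v‖⁻¹ • v ∈ Metric.sphere (0 : E) 1 := by
    simp [norm_smul, hnorm]
  calc Q v₀ * ‖v‖ ^ 2 ≤ Q (‖v‖⁻¹ • v) * ‖v‖ ^ 2 := by gcongr; exact hmin hunit
    _ = Q v := by rw [hhom]; field_simp

section Flow

variable {ι : Type*} [Fintype ι]

theorem dotProduct_self_le_card_mul_sq_norm (v : ι → ℝ) :
    v ⬝ᵥ v ≤ Fintype.card ι * ‖v‖ ^ 2 := by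
  rw [dotProduct, ← nsmul_eq_mul, ← Finset.card_univ]
  refine Finset.sum_le_card_nsmul _ _ _ fun i _ => ?_
  rw [← sq, ← sq_abs]
  exact pow_le_pow_left₀ (abs_nonneg _) (norm_le_pi_norm v i) 2

theorem tendsto_zero_of_tendsto_dotProduct_self {α : Type*} {l : Filter α} {u : α → ι → ℝ}
    (h : Tendsto (fun a => u a ⬝ᵥ u a) l (𝓝 0)) : Tendsto u l (𝓝 0) := by
  refine tendsto_pi_nhds.2 fun i => ?_
  have hsq : Tendsto (fun a => u a i ^ 2) l (𝓝 0) :=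
    squeeze_zero (fun a => sq_nonneg _) (fun a => by
      simpa [dotProduct, sq] using Finset.single_le_sum (f := fun j => u a j * u a j)
        (fun j _ => mul_self_nonneg _) (Finset.mem_univ i)) h
  rw [Pi.zero_apply, tendsto_zero_iff_abs_tendsto_zero]
  simpa [Function.comp_def, Real.sqrt_sq_eq_abs] using (Real.continuous_sqrt.tendsto 0).comp hsq

variable [DecidableEq ι]

theorem hasDerivAt_exp_smul_mulVec (A : Matrix ι ι ℝ) (y : ι → ℝ) (t : ℝ) :
    HasDerivAt (fun s : ℝ => exp (s • A) *ᵥ y) (A *ᵥ (exp (t • A) *ᵥ y)) t := by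
  open scoped Matrix.Norms.Operator in
  rw [mulVec_mulVec]
  exact ((mulVec.addMonoidHomLeft y).toRealLinearMap
    (continuous_id.matrix_mulVec continuous_const)).hasFDerivAt.comp_hasDerivAt t
    (hasDerivAt_exp_smul_const' A t)

theorem exp_smul_mulVec_eq_self {A : Matrix ι ι ℝ} {o : ι → ℝ} (ho : A *ᵥ o = 0) (t : ℝ) :
    exp (t • A) *ᵥ o = o := by
  have hderiv (s : ℝ) : HasDerivAt (fun s : ℝ => exp (s • A) *ᵥ o) 0 s := by
    convert hasDerivAt_exp_smul_mulVec A o s using 1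
    rw [mulVec_mulVec, ((Commute.refl A).smul_right s).exp_right.eq, ← mulVec_mulVec, ho,
      mulVec_zero]
  simpa using is_const_of_deriv_eq_zero (fun s => (hderiv s).differentiableAt)
    (fun s => (hderiv s).deriv) t 0

theorem dotProduct_exp_smul_mulVec {A : Matrix ι ι ℝ} {w : ι → ℝ}
    (hw : ∀ v, w ⬝ᵥ (A *ᵥ v) = 0) (y : ι → ℝ) (t : ℝ) :
    w ⬝ᵥ (exp (t • A) *ᵥ y) = w ⬝ᵥ y := by
  have hderiv (s : ℝ) : HasDerivAt (fun s : ℝ => w ⬝ᵥ (exp (s • A) *ᵥ y)) 0 s := by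
    rw [← hw (exp (s • A) *ᵥ y)]
    exact HasDerivAt.fun_sum fun i _ =>
      ((hasDerivAt_pi.1 (hasDerivAt_exp_smul_mulVec A y s)) i).const_mul (w i)
  simpa using is_const_of_deriv_eq_zero (fun s => (hderiv s).differentiableAt)
    (fun s => (hderiv s).deriv) t 0

theorem tendsto_exp_smul_mulVec_zero {A : Matrix ι ι ℝ} {w : ι → ℝ}
    (hw : ∀ v, w ⬝ᵥ (A *ᵥ v) = 0) {ε : ℝ} (hε : 0 < ε)
    (hdiss : ∀ v, w ⬝ᵥ v = 0 → v ⬝ᵥ (A *ᵥ v) ≤ -ε * (v ⬝ᵥ v)) {y : ι → ℝ} (hy : w ⬝ᵥ y = 0) :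
    Tendsto (fun t : ℝ => exp (t • A) *ᵥ y) atTop (𝓝 0) := by
  set u := fun t : ℝ => exp (t • A) *ᵥ y
  have hu (t : ℝ) : HasDerivAt u (A *ᵥ u t) t := hasDerivAt_exp_smul_mulVec A y t
  have henergy (t : ℝ) :
      HasDerivAt (fun s => u s ⬝ᵥ u s) (2 * (u t ⬝ᵥ (A *ᵥ u t))) t := by
    have := HasDerivAt.fun_sum fun i (_ : i ∈ Finset.univ) =>
      ((hasDerivAt_pi.1 (hu t)) i).mul ((hasDerivAt_pi.1 (hu t)) i)
    refine this.congr_deriv ?_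
    simp only [dotProduct, Finset.mul_sum]
    exact Finset.sum_congr rfl fun i _ => by ring
  refine tendsto_zero_of_tendsto_dotProduct_self
    (tendsto_zero_of_hasDerivAt_le_neg_mul_s7 (mul_pos two_pos hε) henergy (fun t => ?_)
      fun t => dotProduct_self_star_nonneg _)
  have := hdiss (u t) (by rw [dotProduct_exp_smul_mulVec hw, hy])
  linarith

theorem tendsto_exp_smul_mulVec {A : Matrix ι ι ℝ} {o w : ι → ℝ} (ho : A *ᵥ o = 0)
    (hw : ∀ v, w ⬝ᵥ (A *ᵥ v) = 0) (hwo : w ⬝ᵥ o ≠ 0) {ε : ℝ} (hε : 0 < ε)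
    (hdiss : ∀ v, w ⬝ᵥ v = 0 → v ⬝ᵥ (A *ᵥ v) ≤ -ε * (v ⬝ᵥ v)) (x : ι → ℝ) :
    Tendsto (fun t : ℝ => exp (t • A) *ᵥ x) atTop (𝓝 ((w ⬝ᵥ x / w ⬝ᵥ o) • o)) := by
  set m := w ⬝ᵥ x / w ⬝ᵥ o
  have hy : w ⬝ᵥ (x - m • o) = 0 := by
    rw [dotProduct_sub, dotProduct_smul, smul_eq_mul, div_mul_cancel₀ _ hwo, sub_self]
  have hsplit (t : ℝ) : exp (t • A) *ᵥ x = exp (t • A) *ᵥ (x - m • o) + m • o := by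
    rw [mulVec_sub, mulVec_smul, exp_smul_mulVec_eq_self ho, sub_add_cancel]
  simpa [hsplit] using (tendsto_exp_smul_mulVec_zero hw hε hdiss hy).add_const (m • o)

end Flow

theorem sum_comp_add_sub_eq_zero {G M : Type*} [AddGroup G] [Fintype G] [AddCommGroup M]
    (g : G → M) (a : G) : ∑ i, (g (i + a) - g i) = 0 := by
  rw [Finset.sum_sub_distrib, sub_eq_zero]
  exact Equiv.sum_comp (Equiv.addRight a) g

section Cycle

variable {n : ℕ} [NeZero n]

theorem add_one_mod_eq_val_iff_eq_add_one (i j : Fin n) : ((i : ℕ) + 1) % n = j ↔ j = i + 1 := by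
  rw [eq_comm, Fin.ext_iff, Fin.val_add, Fin.val_one', Nat.add_mod_mod]

theorem add_one_ne_sub_one (hn : 3 ≤ n) (i : Fin n) : i + 1 ≠ i - 1 := by
  intro h
  have h2 : (1 + 1 : Fin n) = 0 :=
    add_left_cancel (a := i) (by rw [add_zero, ← add_assoc, h, sub_add_cancel])
  rw [Fin.ext_iff, Fin.val_add, Fin.val_one', Nat.mod_eq_of_lt (a := 1) (by omega),
    Nat.mod_eq_of_lt (by omega)] at h2
  simp at h2

theorem add_one_mod_eq_val_iff_eq_sub_one (i j : Fin n) : ((j : ℕ) + 1) % n = i ↔ j = i - 1 := by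
  rw [add_one_mod_eq_val_iff_eq_add_one, eq_sub_iff_add_eq, eq_comm]

theorem ringC_mulVec (hn : 3 ≤ n) (v : Fin n → ℝ) :
    ringC n *ᵥ v = fun i => (v (i + 1) + v (i - 1)) / 2 := by
  ext i
  have hrow :
      (fun j => ringC n i j) = Pi.single (i + 1) (1 / 2) + Pi.single (i - 1) (1 / 2) := by
    ext j
    simp only [ringC, of_apply, add_one_mod_eq_val_iff_eq_add_one i j,
      add_one_mod_eq_val_iff_eq_sub_one i j, Pi.add_apply, Pi.single_apply]
    have := add_one_ne_sub_one hn i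
    split_ifs <;> simp_all
  rw [mulVec, hrow, add_dotProduct, single_dotProduct, single_dotProduct]
  ring

theorem ringD_mulVec (hn : 3 ≤ n) (v : Fin n → ℝ) :
    ringD n *ᵥ v = fun i => (v (i + 1) - v (i - 1)) / 2 := by
  ext i
  have hrow :
      (fun j => ringD n i j) = Pi.single (i + 1) (1 / 2) + Pi.single (i - 1) (-1 / 2) := by
    ext j
    simp only [ringD, of_apply, add_one_mod_eq_val_iff_eq_add_one i j,
      add_one_mod_eq_val_iff_eq_sub_one i j, Pi.add_apply, Pi.single_apply]
    have := add_one_ne_sub_one hn i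
    split_ifs <;> simp_all
  rw [mulVec, hrow, add_dotProduct, single_dotProduct, single_dotProduct]
  ring

theorem ringFlow_mulVec (hn : 3 ≤ n) (kφ f : ℝ) (v : Fin n → ℝ) :
    (kφ • (ringC n - 1) + f • ringD n) *ᵥ v =
      fun i => kφ * ((v (i + 1) + v (i - 1)) / 2 - v i) + f * ((v (i + 1) - v (i - 1)) / 2) := by
  ext i
  simp [add_mulVec, smul_mulVec, sub_mulVec, ringC_mulVec hn, ringD_mulVec hn]

theorem ringFlow_mulVec_one (hn : 3 ≤ n) (kφ f : ℝ) :
    (kφ • (ringC n - 1) + f • ringD n) *ᵥ 1 = 0 := by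
  ext i
  simp [ringFlow_mulVec hn]

theorem one_dotProduct_ringFlow_mulVec (hn : 3 ≤ n) (kφ f : ℝ) (v : Fin n → ℝ) :
    1 ⬝ᵥ ((kφ • (ringC n - 1) + f • ringD n) *ᵥ v) = 0 := by
  have h₁ := sum_comp_add_sub_eq_zero v 1
  have h₂ := sum_comp_add_sub_eq_zero (fun i => v (i - 1)) 1
  simp only [add_sub_cancel_right] at h₂
  calc 1 ⬝ᵥ ((kφ • (ringC n - 1) + f • ringD n) *ᵥ v)
      = ∑ i, ((kφ + f) / 2 * (v (i + 1) - v i) - (kφ - f) / 2 * (v i - v (i - 1))) := by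
        rw [one_dotProduct, ringFlow_mulVec hn]
        exact Finset.sum_congr rfl fun i _ => by ring
    _ = 0 := by rw [Finset.sum_sub_distrib, ← Finset.mul_sum, ← Finset.mul_sum, h₁, h₂]; simp

theorem dotProduct_ringFlow_mulVec (hn : 3 ≤ n) (kφ f : ℝ) (v : Fin n → ℝ) :
    v ⬝ᵥ ((kφ • (ringC n - 1) + f • ringD n) *ᵥ v) =
      -(kφ / 2) * ∑ i, (v (i + 1) - v i) ^ 2 := by
  have h₁ := sum_comp_add_sub_eq_zero (fun i => v i ^ 2) 1
  have h₂ := sum_comp_add_sub_eq_zero (fun i => v i * v (i - 1)) 1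
  simp only [add_sub_cancel_right] at h₂
  calc v ⬝ᵥ ((kφ • (ringC n - 1) + f • ringD n) *ᵥ v)
      = ∑ i, (-(kφ / 2) * (v (i + 1) - v i) ^ 2 + kφ / 2 * (v (i + 1) ^ 2 - v i ^ 2)
          + (f - kφ) / 2 * (v (i + 1) * v i - v i * v (i - 1))) := by
        rw [dotProduct, ringFlow_mulVec hn]
        exact Finset.sum_congr rfl fun i _ => by ring
    _ = -(kφ / 2) * ∑ i, (v (i + 1) - v i) ^ 2 := by
        rw [Finset.sum_add_distrib, Finset.sum_add_distrib, ← Finset.mul_sum, ← Finset.mul_sum,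
          ← Finset.mul_sum, h₁, h₂]
        simp

open Fin.NatCast in
theorem apply_eq_apply_zero_of_forall_add_one {β : Type*} {v : Fin n → β}
    (h : ∀ i, v (i + 1) = v i) (i : Fin n) : v i = v 0 := by
  have key (k : ℕ) : v (k : Fin n) = v 0 := by
    induction k with
    | zero => simp
    | succ k ih => rw [Nat.cast_succ, h, ih]
  simpa using key i

theorem exists_pos_mul_dotProduct_self_le_sum_sq_sub :
    ∃ c > 0, ∀ v : Fin n → ℝ, ∑ i, v i = 0 → c * (v ⬝ᵥ v) ≤ ∑ i, (v (i + 1) - v i) ^ 2 := by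
  -- Adding `(∑ i, v i) ^ 2` makes the form positive definite on all of `Fin n → ℝ`.
  have hpos (v : Fin n → ℝ) (hv : v ≠ 0) :
      0 < ∑ i, (v (i + 1) - v i) ^ 2 + (∑ i, v i) ^ 2 := by
    refine lt_of_le_of_ne (by positivity) fun h => hv ?_
    obtain ⟨hdiff, hsum⟩ := (add_eq_zero_iff_of_nonneg (by positivity) (by positivity)).1 h.symm
    have hconst := apply_eq_apply_zero_of_forall_add_one fun i => by
      have := (Finset.sum_eq_zero_iff_of_nonneg fun i _ => sq_nonneg _).1 hdiff i
        (Finset.mem_univ _)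
      exact sub_eq_zero.1 (pow_eq_zero_iff two_ne_zero |>.1 this)
    have h0 : v 0 = 0 := by simpa [hconst, NeZero.ne] using hsum
    funext i
    rw [hconst i, h0, Pi.zero_apply]
  obtain ⟨c, hc, hQ⟩ := exists_pos_mul_sq_norm_le
    (Q := fun v : Fin n → ℝ => ∑ i, (v (i + 1) - v i) ^ 2 + (∑ i, v i) ^ 2) (by fun_prop)
    (fun t v => by
      simp only [Pi.smul_apply, smul_eq_mul, ← mul_sub, mul_pow, ← Finset.mul_sum]
      ring)
    hpos
  have hn : (0 : ℝ) < n := Nat.cast_pos.2 (Nat.pos_of_neZero n)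
  refine ⟨c / n, div_pos hc hn, fun v hv => ?_⟩
  calc c / n * (v ⬝ᵥ v) ≤ c / n * (n * ‖v‖ ^ 2) := by
        gcongr; simpa using dotProduct_self_le_card_mul_sq_norm v
    _ = c * ‖v‖ ^ 2 := by field_simp [hn.ne']
    _ ≤ ∑ i, (v (i + 1) - v i) ^ 2 := by simpa [hv] using hQ v

end Cycle

theorem stmt_7_general (n : ℕ) (hn : 3 ≤ n) (kφ f : ℝ) (hkφ : 0 < kφ)
    (x : Fin n → ℝ) :
    Filter.Tendsto
      (fun t : ℝ => NormedSpace.exp (t • (kφ • (ringC n - 1) + f • ringD n)) *ᵥ x)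
      Filter.atTop (nhds (((∑ i, x i) / n) • fun _ => (1 : ℝ))) ∧
    ((∑ i, x i) = 0 →
      Filter.Tendsto
        (fun t : ℝ => NormedSpace.exp (t • (kφ • (ringC n - 1) + f • ringD n)) *ᵥ x)
        Filter.atTop (nhds 0)) := by
  have : NeZero n := ⟨by omega⟩
  obtain ⟨c, hc, hpoincare⟩ := exists_pos_mul_dotProduct_self_le_sum_sq_sub (n := n)
  have hdiss (v : Fin n → ℝ) (hv : 1 ⬝ᵥ v = 0) :
      v ⬝ᵥ ((kφ • (ringC n - 1) + f • ringD n) *ᵥ v) ≤ -(kφ * c / 2) * (v ⬝ᵥ v) := by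
    rw [one_dotProduct] at hv
    rw [dotProduct_ringFlow_mulVec hn]
    nlinarith [hpoincare v hv]
  have hlim := tendsto_exp_smul_mulVec (ringFlow_mulVec_one hn kφ f)
    (one_dotProduct_ringFlow_mulVec hn kφ f) (by simp [NeZero.ne]) (by positivity) hdiss x
  simp only [one_dotProduct, Pi.one_apply, Finset.sum_const, Finset.card_univ, Fintype.card_fin,
    nsmul_eq_mul, mul_one] at hlim
  exact ⟨hlim, fun hx => by simpa [hx] using hlim⟩

/-- Convergence of the Controller–2 error flow: `exp(t (k_φ (C-I) + f D)) x` converges to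
`((∑ᵢ xᵢ)/n) 𝟙`; in particular to `0` when `∑ᵢ xᵢ = 0`. -/
theorem stmt_7 (n : ℕ) (hn : 3 ≤ n) (kφ f : ℝ) (hkφ : 0 < kφ) (hf : 0 < f)
    (x : Fin n → ℝ) :
    Filter.Tendsto
      (fun t : ℝ => NormedSpace.exp (t • (kφ • (ringC n - 1) + f • ringD n)) *ᵥ x)
      Filter.atTop (nhds (((∑ i, x i) / n) • fun _ => (1 : ℝ))) ∧
    ((∑ i, x i) = 0 →
      Filter.Tendsto
        (fun t : ℝ => NormedSpace.exp (t • (kφ • (ringC n - 1) + f • ringD n)) *ᵥ x)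
        Filter.atTop (nhds 0)) :=
  stmt_7_general n hn kφ f hkφ x
end

section
/- Let n ≥ 1, let B be an n×n complex matrix, and let k₁, k₂ be nonzero complex numbers. Let A be the 2n×2n block matrix A = [[0, k₁ I], [B, k₂ B]], where 0 is the n×n zero matrix and I the n×n identity. Suppose μ is an eigenvalue of B with eigenvector u ≠ 0 (i.e. B u = μ u), and let λ ∈ ℂ be a root of λ² − k₂ μ λ − k₁ μ = 0. Then λ is an eigenvalue of A with eigenvector (k₁ u, λ u) ∈ ℂ^{2n}, i.e. A·(k₁ u, λ u) = λ·(k₁ u, λ u), and this vector is nonzero. -/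
open Matrix

/-- Lemma 2 of the paper: for the block matrix `A = [[0, k₁ I], [B, k₂ B]]`, if `B u = μ u`
with `u ≠ 0` and `λ² - k₂ μ λ - k₁ μ = 0`, then `(k₁ u, λ u)` is a (nonzero) eigenvector of
`A` with eigenvalue `λ`. -/
theorem stmt_8 (n : ℕ) (hn : 1 ≤ n) (B : Matrix (Fin n) (Fin n) ℂ) (k₁ k₂ : ℂ)
    (hk₁ : k₁ ≠ 0) (hk₂ : k₂ ≠ 0) (μ : ℂ) (u : Fin n → ℂ) (hu : u ≠ 0)
    (hBu : B *ᵥ u = μ • u) (lam : ℂ) (hlam : lam ^ 2 - k₂ * μ * lam - k₁ * μ = 0) :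
    Matrix.fromBlocks 0 (k₁ • (1 : Matrix (Fin n) (Fin n) ℂ)) B (k₂ • B) *ᵥ
        Sum.elim (k₁ • u) (lam • u) = lam • Sum.elim (k₁ • u) (lam • u) ∧
    Sum.elim (k₁ • u) (lam • u) ≠ 0 := by
  have hlam2 : lam ^ 2 = k₂ * μ * lam + k₁ * μ := by linear_combination hlam
  constructor
  · rw [fromBlocks_mulVec, Sum.elim_comp_inl, Sum.elim_comp_inr]
    funext x
    cases x with
    | inl i =>
      simp [mulVec_smul, smul_mulVec, smul_smul, mul_comm]
      ring
    | inr i =>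
      simp only [Sum.elim_inr, Pi.add_apply, mulVec_smul, hBu, smul_mulVec,
        Pi.smul_apply, smul_eq_mul]
      linear_combination (-(u i)) * hlam2
  · intro h
    apply hu
    have := congrArg (fun v => v ∘ Sum.inl) h
    funext i
    have h2 := congrFun this i
    simp at h2
    rcases h2 with h2 | h2
    · exact absurd h2 hk₁
    · exact h2
end

section
/- Let r > 0, let ρ_i, ρ_j ≥ 0 and φ_i, φ_j, z_i, z_j ∈ ℝ, and define D_{ij} = √(ρ_i² + ρ_j² − 2 ρ_i ρ_j cos(φ_j − φ_i) + (z_j − z_i)²). If the two robots are radially separated, i.e. |ρ_i − ρ_j| > 2r, or phase separated, i.e. min(ρ_i, ρ_j) · |sin((φ_j − φ_i)/2)| > r, then they are not in collision, i.e. D_{ij} > 2r. -/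
/-!
By the half-angle formula the squared distance splits as
`D² = (ρᵢ - ρⱼ)² + 4 ρᵢ ρⱼ sin² ((φⱼ - φᵢ)/2) + (zⱼ - zᵢ)²`, a sum of nonnegative terms.
Dropping all but the first gives `D ≥ |ρᵢ - ρⱼ|`; dropping all but the second and using
`min(ρᵢ, ρⱼ)² ≤ ρᵢ ρⱼ` gives `D ≥ 2 min(ρᵢ, ρⱼ) |sin ((φⱼ - φᵢ)/2)|`.
-/

open Real

theorem sq_add_sq_sub_two_mul_cos_eq (a b θ : ℝ) :
    a ^ 2 + b ^ 2 - 2 * a * b * cos θ = (a - b) ^ 2 + 4 * a * b * sin (θ / 2) ^ 2 := by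
  have hθ : cos θ = 1 - 2 * sin (θ / 2) ^ 2 := by
    rw [← cos_two_mul_eq_one_sub, mul_div_cancel₀ θ two_ne_zero]
  rw [hθ]
  ring

theorem abs_sub_le_sqrt_cylindrical_dist (a b θ h : ℝ) (ha : 0 ≤ a) (hb : 0 ≤ b) :
    |a - b| ≤ √(a ^ 2 + b ^ 2 - 2 * a * b * cos θ + h ^ 2) := by
  apply abs_le_sqrt
  rw [sq_add_sq_sub_two_mul_cos_eq]
  have : 0 ≤ 4 * a * b * sin (θ / 2) ^ 2 := by positivity
  nlinarith [sq_nonneg h]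

theorem two_mul_min_mul_abs_sin_le_sqrt_cylindrical_dist (a b θ h : ℝ) (ha : 0 ≤ a)
    (hb : 0 ≤ b) :
    2 * min a b * |sin (θ / 2)| ≤ √(a ^ 2 + b ^ 2 - 2 * a * b * cos θ + h ^ 2) := by
  have hmin : 0 ≤ min a b := le_min ha hb
  have hmin_sq : min a b ^ 2 ≤ a * b := by
    rw [sq]
    exact mul_le_mul (min_le_left a b) (min_le_right a b) hmin ha
  calc 2 * min a b * |sin (θ / 2)| = |2 * min a b * sin (θ / 2)| := by
        rw [abs_mul, abs_of_nonneg (by positivity : 0 ≤ 2 * min a b)]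
    _ ≤ _ := by
        apply abs_le_sqrt
        rw [sq_add_sq_sub_two_mul_cos_eq]
        nlinarith [sq_nonneg (a - b), sq_nonneg h, sq_nonneg (sin (θ / 2))]

theorem stmt_16_general (r : ℝ) (ρi ρj : ℝ) (hρi : 0 ≤ ρi) (hρj : 0 ≤ ρj)
    (φi φj zi zj : ℝ)
    (hsep : 2 * r < |ρi - ρj| ∨ r < min ρi ρj * |Real.sin ((φj - φi) / 2)|) :
    2 * r <
      Real.sqrt (ρi ^ 2 + ρj ^ 2 - 2 * ρi * ρj * Real.cos (φj - φi) + (zj - zi) ^ 2) := by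
  rcases hsep with hradial | hphase
  · exact hradial.trans_le (abs_sub_le_sqrt_cylindrical_dist _ _ _ _ hρi hρj)
  · have := two_mul_min_mul_abs_sin_le_sqrt_cylindrical_dist ρi ρj (φj - φi) (zj - zi) hρi hρj
    linarith

/-- If two robots are radially separated (`|ρ_i - ρ_j| > 2r`) or phase separated
(`min(ρ_i,ρ_j)|sin((φ_j-φ_i)/2)| > r`), then they are not in collision (`D_{ij} > 2r`). -/
theorem stmt_16 (r : ℝ) (hr : 0 < r) (ρi ρj : ℝ) (hρi : 0 ≤ ρi) (hρj : 0 ≤ ρj)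
    (φi φj zi zj : ℝ)
    (hsep : 2 * r < |ρi - ρj| ∨ r < min ρi ρj * |Real.sin ((φj - φi) / 2)|) :
    2 * r <
      Real.sqrt (ρi ^ 2 + ρj ^ 2 - 2 * ρi * ρj * Real.cos (φj - φi) + (zj - zi) ^ 2) :=
  stmt_16_general r ρi ρj hρi hρj φi φj zi zj hsep
end

section
/- Let r > 0, let ρ_i, ρ_j ≥ 0 and φ_i, φ_j, z_i, z_j ∈ ℝ, and define D_{ij} = √(ρ_i² + ρ_j² − 2 ρ_i ρ_j cos(φ_j − φ_i) + (z_j − z_i)²). Let s > 0 be such that s ≤ |sin((φ_j − φ_i)/2)|, and set σ = r/s. If ρ_i ≥ σ + 2r, then D_{ij} ≥ 2r, i.e. robots i and j are not in (strict) collision. -/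
/-- Pairwise form of the sufficient safety condition: if `s ≤ |sin((φ_j-φ_i)/2)|`, `σ = r/s`
and `ρ_i ≥ σ + 2r`, then `D_{ij} ≥ 2r`. -/
theorem stmt_17 (r : ℝ) (hr : 0 < r) (ρi ρj : ℝ) (hρi : 0 ≤ ρi) (hρj : 0 ≤ ρj)
    (φi φj zi zj : ℝ) (s : ℝ) (hs : 0 < s) (hsle : s ≤ |Real.sin ((φj - φi) / 2)|)
    (hρ : r / s + 2 * r ≤ ρi) :
    2 * r ≤
      Real.sqrt (ρi ^ 2 + ρj ^ 2 - 2 * ρi * ρj * Real.cos (φj - φi) + (zj - zi) ^ 2) := by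
  set S := Real.sin ((φj - φi) / 2) with hS
  have hcos : Real.cos (φj - φi) = 1 - 2 * S ^ 2 := by
    have h1 := Real.cos_two_mul ((φj - φi) / 2)
    have h2 := Real.sin_sq_add_cos_sq ((φj - φi) / 2)
    rw [show 2 * ((φj - φi) / 2) = φj - φi by ring] at h1
    rw [← hS] at h2; nlinarith
  have hs2 : s ^ 2 ≤ S ^ 2 := by
    calc s ^ 2 ≤ |S| ^ 2 := pow_le_pow_left₀ hs.le hsle 2
    _ = S ^ 2 := sq_abs S
  have key : (2 * r) ^ 2 ≤ ρi ^ 2 + ρj ^ 2 - 2 * ρi * ρj * Real.cos (φj - φi) + (zj - zi) ^ 2 := by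
    rw [hcos]
    rcases le_or_gt ρj (ρi - 2 * r) with h | h
    · nlinarith [sq_nonneg (zj - zi), mul_nonneg (mul_nonneg hρi hρj) (sq_nonneg S),
        sq_nonneg (ρi - ρj - 2 * r), hs.le, div_pos hr hs]
    · have h1 : r / s ≤ ρi := by linarith
      have h2 : r / s ≤ ρj := by linarith
      have hrs : r / s * s = r := div_mul_cancel₀ r hs.ne'
      have hρs : 0 < r / s := div_pos hr hs
      have : r ^ 2 ≤ ρi * ρj * s ^ 2 := by
        nlinarith [mul_le_mul h1 h2 hρs.le hρi, sq_nonneg s]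
      nlinarith [sq_nonneg (zj - zi), sq_nonneg (ρi - ρj),
        mul_le_mul_of_nonneg_left hs2 (mul_nonneg hρi hρj)]
  calc 2 * r = Real.sqrt ((2 * r) ^ 2) := (Real.sqrt_sq (by positivity)).symm
  _ ≤ _ := Real.sqrt_le_sqrt key
end
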